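/- Theory-independent bound (discrete probability version): Let Λ ⊂ ℝ be a finite set containing positive and negative values, x₊ := min{a ∈ Λ : a > 0}, x₋ := -min{a ∈ Λ : a < 0}, with x₊ < x₋. Let p₀, p₁, p₂ be probability distributions on Λ whose means sum to zero: ∑_{k=0}^{2} ∑_{a∈Λ} a·pₖ(a) = 0. Then (1/3)∑_{k=0}^{2} ∑_{a∈Λ} Θ(a)·pₖ(a) ≤ (1 + x₊/x₋)⁻¹, where Θ(a) = 1 if a > 0, 1/2 if a = 0, 0 if a < 0. -/
import Mathlib


open Real

noncomputable def theta (x : ℝ) : ℝ := if 0 < x then 1 else if x = 0 then 1 / 2 else 0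

theorem stmt_4 (Λ : Finset ℝ)
    (hpos : (Λ.filter fun a => 0 < a).Nonempty)
    (hneg : (Λ.filter fun a => a < 0).Nonempty)
    (xp xm : ℝ)
    (hxp : xp = (Λ.filter fun a => 0 < a).min' hpos)
    (hxm : xm = -((Λ.filter fun a => a < 0).min' hneg))
    (hlt : xp < xm)
    (p : Fin 3 → ℝ → ℝ)
    (hpnn : ∀ (k : Fin 3), ∀ a ∈ Λ, 0 ≤ p k a)
    (hnorm : ∀ k : Fin 3, ∑ a ∈ Λ, p k a = 1)
    (hmean : ∑ k : Fin 3, ∑ a ∈ Λ, a * p k a = 0) :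
    (1 / 3) * ∑ k : Fin 3, ∑ a ∈ Λ, theta a * p k a ≤ (1 + xp / xm)⁻¹ := by
  have hxp0 : 0 < xp := by
    rw [hxp]
    have h := Finset.min'_mem _ hpos
    exact (Finset.mem_filter.mp h).2
  have hxm0 : 0 < xm := by
    have h := Finset.min'_mem _ hneg
    have h2 := (Finset.mem_filter.mp h).2
    rw [hxm]; linarith
  have hsum0 : 0 < xm + xp := by linarith
  have key : ∀ a ∈ Λ, theta a ≤ (xm + a) / (xm + xp) := by
    intro a ha
    unfold theta
    split_ifs with h1 h2
    · have hxa : xp ≤ a := by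
        rw [hxp]
        exact Finset.min'_le _ _ (Finset.mem_filter.mpr ⟨ha, h1⟩)
      rw [le_div_iff₀ hsum0]; linarith
    · subst h2
      rw [div_le_div_iff₀ (by norm_num) hsum0]; linarith
    · have haneg : a < 0 := lt_of_le_of_ne (not_lt.mp h1) h2
      have hma : -xm ≤ a := by
        have := (Λ.filter fun a => a < 0).min'_le a (Finset.mem_filter.mpr ⟨ha, haneg⟩)
        rw [hxm]; linarith
      apply div_nonneg <;> linarith
  have hk : ∀ k : Fin 3, ∑ a ∈ Λ, theta a * p k a
      ≤ (xm + ∑ a ∈ Λ, a * p k a) / (xm + xp) := by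
    intro k
    have h1 : ∑ a ∈ Λ, theta a * p k a ≤ ∑ a ∈ Λ, (xm + a) / (xm + xp) * p k a :=
      Finset.sum_le_sum fun a ha => mul_le_mul_of_nonneg_right (key a ha) (hpnn k a ha)
    have h2 : ∑ a ∈ Λ, (xm + a) / (xm + xp) * p k a
        = (xm + ∑ a ∈ Λ, a * p k a) / (xm + xp) := by
      rw [Finset.sum_congr rfl
        (fun a _ => by ring :
          ∀ a ∈ Λ, (xm + a) / (xm + xp) * p k a
            = xm / (xm + xp) * p k a + a * p k a * (xm + xp)⁻¹)]
      rw [Finset.sum_add_distrib, ← Finset.mul_sum, ← Finset.sum_mul, hnorm k]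
      field_simp
    linarith [h1, h2.le, h2.ge]
  have htot : ∑ k : Fin 3, ∑ a ∈ Λ, theta a * p k a ≤ 3 * xm / (xm + xp) := by
    have h1 : ∑ k : Fin 3, ∑ a ∈ Λ, theta a * p k a
        ≤ ∑ k : Fin 3, (xm + ∑ a ∈ Λ, a * p k a) / (xm + xp) :=
      Finset.sum_le_sum fun k _ => hk k
    have h2 : ∑ k : Fin 3, (xm + ∑ a ∈ Λ, a * p k a) / (xm + xp)
        = 3 * xm / (xm + xp) := by
      rw [← Finset.sum_div, Finset.sum_add_distrib, hmean]
      simp [Finset.sum_const]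
      try ring_nf
    linarith [h1, h2.le]
  have hrhs : (1 + xp / xm)⁻¹ = xm / (xm + xp) := by
    field_simp
  rw [hrhs]
  have h3 : 1 / 3 * (3 * xm / (xm + xp)) = xm / (xm + xp) := by ring
  linarith [htot]
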